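/- arXiv:2103.07913 — 6 statements merged into one kernel-verified Lean document; each statement's English description precedes it below -/
import Mathlib

section
/- Let κ be an infinite cardinal and let T = {T_m : m < κ} be an indexed family of forests, each having no isolated vertices and exactly κ connected components, each component of cardinality at most κ. Then the κ-regular tree admits a T-factorization: a family {Y_m : m < κ} of pairwise edge-disjoint spanning subgraphs of the κ-regular tree such that Y_m is isomorphic to T_m for every m < κ and the union of their edge sets is the entire edge set of the κ-regular tree. -/
open Cardinal

universe u

/-- `G` is `κ`-regular: every vertex has degree (neighbourhood cardinality) exactly `κ`. -/
def SimpleGraph.CardRegular {V : Type u} (G : SimpleGraph V) (κ : Cardinal.{u}) : Prop :=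
  ∀ v : V, #(G.neighborSet v) = κ

/-- `G` has no isolated vertices. -/
def SimpleGraph.NoIsolatedVerts {V : Type u} (G : SimpleGraph V) : Prop :=
  ∀ v : V, ∃ w : V, G.Adj v w

/-- A factorization of `G`: a family of spanning subgraphs, pairwise edge-disjoint,
whose edge sets cover `E(G)`. -/
def SimpleGraph.IsFactorization {V : Type u} {ι : Type u} (G : SimpleGraph V)
    (F : ι → SimpleGraph V) : Prop :=
  (∀ i, F i ≤ G) ∧ (Pairwise fun i j => Disjoint (F i).edgeSet (F j).edgeSet) ∧
    (⋃ i, (F i).edgeSet) = G.edgeSet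

/-- In the forest `F` rooted at `v₀`, `u` is a child of `w`. -/
def SimpleGraph.IsChild {V : Type u} (F : SimpleGraph V) (v₀ u w : V) : Prop :=
  F.Adj w u ∧ F.Reachable v₀ u ∧ F.dist v₀ u = F.dist v₀ w + 1

/-- The graph with edges `v_j v_i` for `v_i ∈ C j`, `j < i`. -/
def childGraph {V I : Type u} [LT I] (v : I ≃ V) (C : I → Set V) : SimpleGraph V :=
  SimpleGraph.fromEdgeSet {e | ∃ i j : I, j < i ∧ (v i : V) ∈ C j ∧ e = s(v j, v i)}

/-- Disjoint union of `ι`-many copies of `T`. -/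
def copiesGraph (ι : Type u) {W : Type u} (T : SimpleGraph W) : SimpleGraph (ι × W) where
  Adj p q := p.1 = q.1 ∧ T.Adj p.2 q.2
  symm := ⟨by rintro p q ⟨h1, h2⟩; exact ⟨h1.symm, h2.symm⟩⟩
  loopless := ⟨by rintro p ⟨-, h⟩; exact T.loopless.irrefl _ h⟩


/-!
Build a tree `X` level by level. Every vertex `x` of `X` carries a label in each forest `T m`
and, except the root, a colour: the colour of the edge to its parent. Roots of components are
fixed once and for all, so every vertex of a forest has a parent (unless it is a root) and a set
of children. The children of `x` are the pairs `(m, u)` with `u` a child of the `m`-label of `x`;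
the child `(m, u)` has colour `m` and `m`-label `u`, while for every other `m'` its `m'`-label is
the root of a component of `T m'` that has not been used before. Components are handed out level
by level along a bijection with `Option (ℕ × κ)`, so each component is used exactly once, and
therefore `x ↦ label x m` is a bijection from `X` onto the vertices of `T m` mapping the edges of
colour `m` onto the edges of `T m`.

Every vertex of `X` has exactly `κ` children: all but at most one of its labels are roots, roots
have children since there are no isolated vertices, and the bound on the orders of the components
gives at most `κ`. So `X`, like the `κ`-regular tree, is isomorphic to the tree of finite lists
over `κ`, and the colour classes of `X` transported to the `κ`-regular tree form the required
factorization.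
-/

lemma Cardinal.mk_sigma_le_of_le {A : Type u} {f : A → Type u} {c : Cardinal.{u}} (hc : ℵ₀ ≤ c)
    (hA : #A ≤ c) (hf : ∀ a, #(f a) ≤ c) : #(Σ a, f a) ≤ c :=
  calc #(Σ a, f a) ≤ Cardinal.sum fun _ : A => c := (mk_sigma f).trans_le (sum_le_sum _ _ hf)
    _ = #A * c := sum_const' A c
    _ ≤ c * c := mul_le_mul_left hA c
    _ = c := mul_eq_self hc

lemma Cardinal.le_mk_sigma_of_nonempty {K : Type u} {f : K → Type u} (hK : ℵ₀ ≤ #K)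
    (s : Finset K) (hf : ∀ m ∉ s, Nonempty (f m)) : #K ≤ #{p : Σ m, f m // p.1 ∉ s} := by
  have : Infinite K := infinite_iff.mpr hK
  have hcompl : #(↑(s : Set K)ᶜ : Set K) = #K :=
    mk_compl_of_infinite _ ((lt_aleph0_of_finite _).trans_le hK)
  rw [← hcompl]
  refine mk_le_of_injective (f := fun m => ⟨⟨m.1, (hf m.1 m.2).some⟩, m.2⟩) ?_
  intro m m' h
  exact Subtype.ext (congrArg (fun p => p.1.1) h)

namespace SimpleGraph

variable {V : Type u}

def parentGraph (pa : V → Option V) : SimpleGraph V := fromRel fun x y => pa y = some x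

lemma parentGraph_adj {pa : V → Option V} {x y : V} :
    (parentGraph pa).Adj x y ↔ x ≠ y ∧ (pa y = some x ∨ pa x = some y) :=
  fromRel_adj _ _ _

section Rooted

variable (F : SimpleGraph V)

lemma reachable_out (v : V) : F.Reachable (F.connectedComponentMk v).out v :=
  ConnectedComponent.exact (Quot.out_eq _)

-- Every component is rooted at its representative `Quot.out`.
noncomputable def depth (v : V) : ℕ := F.dist (F.connectedComponentMk v).out v

noncomputable def pathFromRoot (v : V) : F.Walk (F.connectedComponentMk v).out v :=
  (F.reachable_out v).exists_path_of_dist.choose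

lemma pathFromRoot_isPath (v : V) : (F.pathFromRoot v).IsPath :=
  (F.reachable_out v).exists_path_of_dist.choose_spec.1

lemma length_pathFromRoot (v : V) : (F.pathFromRoot v).length = F.depth v :=
  (F.reachable_out v).exists_path_of_dist.choose_spec.2

noncomputable def parent (v : V) : V := (F.pathFromRoot v).penultimate

noncomputable def parent? (v : V) : Option V := if F.depth v = 0 then none else some (F.parent v)

variable {F}

lemma depth_eq_zero_iff {v : V} : F.depth v = 0 ↔ (F.connectedComponentMk v).out = v :=
  (F.reachable_out v).dist_eq_zero_iff

lemma connectedComponentMk_out (c : F.ConnectedComponent) : F.connectedComponentMk c.out = c :=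
  Quot.out_eq c

lemma depth_out (c : F.ConnectedComponent) : F.depth c.out = 0 := by
  rw [depth_eq_zero_iff, connectedComponentMk_out]

lemma parent_adj {v : V} (h : F.depth v ≠ 0) : F.Adj (F.parent v) v :=
  Walk.adj_penultimate (by rw [← Walk.length_eq_zero_iff, length_pathFromRoot]; exact h)

lemma depth_parent {v : V} (h : F.depth v ≠ 0) : F.depth v = F.depth (F.parent v) + 1 := by
  have hadj := parent_adj h
  have hroot : (F.connectedComponentMk (F.parent v)).out = (F.connectedComponentMk v).out := by
    rw [ConnectedComponent.connectedComponentMk_eq_of_adj hadj]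
  have hdepth : F.depth (F.parent v) = F.dist (F.connectedComponentMk v).out (F.parent v) := by
    rw [depth, hroot]
  have hle : F.dist (F.connectedComponentMk v).out (F.parent v) ≤ F.depth v - 1 := by
    rw [← length_pathFromRoot, ← Walk.length_dropLast]
    exact dist_le _
  have := hadj.diff_dist_adj (u := (F.connectedComponentMk v).out)
  rw [hdepth]
  unfold depth at h hle ⊢
  omega

lemma parent?_eq_none_iff {v : V} : F.parent? v = none ↔ F.depth v = 0 := by
  simp [parent?]

lemma parent?_eq_some_iff {u v : V} : F.parent? v = some u ↔ F.depth v ≠ 0 ∧ F.parent v = u := by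
  simp [parent?]

lemma adj_of_parent?_eq_some {u v : V} (h : F.parent? v = some u) : F.Adj u v := by
  obtain ⟨hv, rfl⟩ := parent?_eq_some_iff.mp h
  exact parent_adj hv

lemma depth_of_parent?_eq_some {u v : V} (h : F.parent? v = some u) :
    F.depth v = F.depth u + 1 := by
  obtain ⟨hv, rfl⟩ := parent?_eq_some_iff.mp h
  exact depth_parent hv

lemma IsAcyclic.penultimate_eq_of_adj (hF : F.IsAcyclic) {r u v : V} {p : F.Walk r u}
    {q : F.Walk r v} (hp : p.IsPath) (hq : q.IsPath) (h : F.Adj u v)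
    (hlen : q.length = p.length + 1) : q.penultimate = u := by
  classical
  by_cases hu : u ∈ q.support
  · rw [hF.path_concat hp hq h hu, Walk.penultimate_concat]
  · have hv := hF.mem_support_of_ne_mem_support_of_adj_of_isPath hp hq h hu
    have : p.takeUntil v hv = q :=
      congrArg Subtype.val ((hF.subsingleton_path _ _).elim ⟨_, hp.takeUntil hv⟩ ⟨q, hq⟩)
    have := p.length_takeUntil_le_length hv
    grind

lemma IsAcyclic.parent?_eq_some_of_adj (hF : F.IsAcyclic) {u v : V} (h : F.Adj u v)
    (hd : F.depth v = F.depth u + 1) : F.parent? v = some u := by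
  have hroot : (F.connectedComponentMk u).out = (F.connectedComponentMk v).out := by
    rw [ConnectedComponent.connectedComponentMk_eq_of_adj h]
  refine parent?_eq_some_iff.mpr ⟨by omega, ?_⟩
  refine hF.penultimate_eq_of_adj (p := (F.pathFromRoot u).copy hroot rfl)
    ((Walk.isPath_copy _ _ _).mpr (F.pathFromRoot_isPath u)) (F.pathFromRoot_isPath v) h ?_
  rw [Walk.length_copy, length_pathFromRoot, length_pathFromRoot, hd]

lemma IsAcyclic.parent?_eq_some_or_of_adj (hF : F.IsAcyclic) {u v : V} (h : F.Adj u v) :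
    F.parent? v = some u ∨ F.parent? u = some v := by
  have hroot : (F.connectedComponentMk u).out = (F.connectedComponentMk v).out := by
    rw [ConnectedComponent.connectedComponentMk_eq_of_adj h]
  rcases hF.dist_eq_dist_add_one_of_adj_of_reachable _ h (hroot ▸ F.reachable_out u) with hd | hd
  · exact Or.inr (hF.parent?_eq_some_of_adj h.symm (by rw [depth, depth, hroot]; exact hd))
  · exact Or.inl (hF.parent?_eq_some_of_adj h (by rw [depth, depth, hroot]; exact hd))

lemma IsAcyclic.adj_iff (hF : F.IsAcyclic) {u v : V} :
    F.Adj u v ↔ F.parent? v = some u ∨ F.parent? u = some v := by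
  refine ⟨hF.parent?_eq_some_or_of_adj, ?_⟩
  rintro (h | h)
  · exact adj_of_parent?_eq_some h
  · exact (adj_of_parent?_eq_some h).symm

lemma IsAcyclic.eq_parentGraph (hF : F.IsAcyclic) : F = parentGraph F.parent? := by
  ext u v
  rw [parentGraph_adj]
  exact ⟨fun h => ⟨h.ne, hF.adj_iff.mp h⟩, fun h => hF.adj_iff.mpr h.2⟩

lemma IsAcyclic.neighborSet_eq (hF : F.IsAcyclic) (v : V) :
    F.neighborSet v = {u | F.parent? u = some v} ∪ {u | F.parent? v = some u} := by
  ext u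
  exact hF.adj_iff

end Rooted

section ListTree

variable {V' K : Type u}

def listTree (K : Type u) : SimpleGraph (List K) := parentGraph List.tail?

def parentGraphIso {pa : V → Option V} {pa' : V' → Option V'} (f : V ≃ V')
    (h : ∀ v, pa' (f v) = (pa v).map f) : parentGraph pa ≃g parentGraph pa' where
  toEquiv := f
  map_rel_iff' := by
    intro x y
    simp [parentGraph_adj, h, f.injective.eq_iff]

theorem exists_equiv_list_of_parent (pa : V → Option V) (lv : V → ℕ) (r : V)
    (hroot : ∀ v, pa v = none ↔ v = r) (hlv : ∀ u v, pa v = some u → lv v = lv u + 1)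
    (ch : ∀ v, K ≃ {u // pa u = some v}) :
    ∃ f : List K ≃ V, ∀ l, pa (f l) = l.tail?.map f := by
  let f : List K → V := fun l => l.rec r fun a _ v => ch v a
  have hf : ∀ l, pa (f l) = l.tail?.map f
    | [] => (hroot r).mpr rfl
    | a :: l => (ch (f l) a).prop
  have hinj : Function.Injective f := by
    intro l₁
    induction l₁ with
    | nil =>
      rintro (_ | ⟨a, l₂⟩) h
      · rfl
      · simpa [← h, hf []] using hf (a :: l₂)
    | cons a l₁ ih =>
      rintro (_ | ⟨b, l₂⟩) h
      · simpa [h, hf []] using hf (a :: l₁)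
      · have hl : l₁ = l₂ := ih (by simpa [h, hf] using (hf (a :: l₁)).symm)
        subst hl
        rw [(ch (f l₁)).injective (Subtype.ext h)]
  have hsurj : ∀ n v, lv v = n → ∃ l, f l = v := by
    intro n
    induction n using Nat.strong_induction_on with
    | _ n ih =>
      intro v hv
      cases hpa : pa v with
      | none => exact ⟨[], ((hroot v).mp hpa).symm⟩
      | some u =>
        obtain ⟨l, rfl⟩ := ih (lv u) (by rw [← hv, hlv u v hpa]; omega) u rfl
        exact ⟨(ch (f l)).symm ⟨v, hpa⟩ :: l, congrArg Subtype.val ((ch (f l)).apply_symm_apply _)⟩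
  exact ⟨Equiv.ofBijective f ⟨hinj, fun v => hsurj _ v rfl⟩, hf⟩

theorem nonempty_listTree_iso_parentGraph (pa : V → Option V) (lv : V → ℕ) (r : V)
    (hroot : ∀ v, pa v = none ↔ v = r) (hlv : ∀ u v, pa v = some u → lv v = lv u + 1)
    (ch : ∀ v, K ≃ {u // pa u = some v}) : Nonempty (listTree K ≃g parentGraph pa) :=
  let ⟨f, hf⟩ := exists_equiv_list_of_parent pa lv r hroot hlv ch
  ⟨parentGraphIso f hf⟩

end ListTree

section ColourClass

variable {K : Type u}

open Classical in
noncomputable def colourClass (pa : V → Option V) (col : V → Option K) (m : K) : SimpleGraph V :=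
  parentGraph fun v => if col v = some m then pa v else none

lemma colourClass_adj {pa : V → Option V} {col : V → Option K} {m : K} {x y : V} :
    (colourClass pa col m).Adj x y ↔
      x ≠ y ∧ (pa y = some x ∧ col y = some m ∨ pa x = some y ∧ col x = some m) := by
  simp [colourClass, parentGraph_adj, and_comm]

theorem isFactorization_colourClass (pa : V → Option V) (col : V → Option K) (lv : V → ℕ)
    (hlv : ∀ u v, pa v = some u → lv v = lv u + 1)
    (hcol : ∀ u v, pa v = some u → ∃ m, col v = some m) :
    (parentGraph pa).IsFactorization (colourClass pa col) := by
  refine ⟨fun m x y h => ?_, fun m m' hm => ?_, ?_⟩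
  · obtain ⟨hne, h⟩ := colourClass_adj.mp h
    exact parentGraph_adj.mpr ⟨hne, h.imp And.left And.left⟩
  · refine Set.disjoint_left.mpr ?_
    rintro ⟨x, y⟩ h h'
    obtain ⟨-, h | h⟩ := colourClass_adj.mp h <;> obtain ⟨-, h' | h'⟩ := colourClass_adj.mp h'
    all_goals first
      | exact hm (Option.some_injective _ (h.2.symm.trans h'.2))
      | have := hlv _ _ h.1; have := hlv _ _ h'.1; omega
  · ext ⟨x, y⟩
    simp only [Set.mem_iUnion, mem_edgeSet, colourClass_adj, parentGraph_adj]
    constructor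
    · rintro ⟨m, hne, h⟩
      exact ⟨hne, h.imp And.left And.left⟩
    · rintro ⟨hne, h | h⟩
      · obtain ⟨m, hm⟩ := hcol _ _ h
        exact ⟨m, hne, Or.inl ⟨h, hm⟩⟩
      · obtain ⟨m, hm⟩ := hcol _ _ h
        exact ⟨m, hne, Or.inr ⟨h, hm⟩⟩

theorem IsFactorization.comap {V' ι : Type u} {G : SimpleGraph V}
    {H : SimpleGraph V'} {F : ι → SimpleGraph V'} (e : G ≃g H) (hF : H.IsFactorization F) :
    G.IsFactorization fun i => (F i).comap e := by
  obtain ⟨hle, hdisj, hcover⟩ := hF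
  refine ⟨fun i u v h => e.map_adj_iff.mp (hle i h), fun i j hij => ?_, ?_⟩
  · refine Set.disjoint_left.mpr ?_
    rintro ⟨u, v⟩ hi hj
    exact Set.disjoint_left.mp (hdisj hij) (show s(e u, e v) ∈ (F i).edgeSet from hi) hj
  · ext ⟨u, v⟩
    have := congrArg (s(e u, e v) ∈ ·) hcover
    simpa [e.map_adj_iff] using this

end ColourClass

section RegularTree

variable {K : Type u} {F : SimpleGraph V}

lemma IsAcyclic.mk_children_eq_of_cardRegular (hF : F.IsAcyclic) {κ : Cardinal.{u}}
    (hκ : ℵ₀ ≤ κ) (hreg : F.CardRegular κ) (v : V) : #{u // F.parent? u = some v} = κ := by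
  have hpar : #{u | F.parent? v = some u} ≤ 1 :=
    mk_le_one_iff_set_subsingleton.mpr fun a ha b hb => Option.some_injective _ (ha.symm.trans hb)
  have hle : #{u // F.parent? u = some v} ≤ κ := by
    rw [← hreg v, hF.neighborSet_eq]
    exact mk_le_mk_of_subset Set.subset_union_left
  have hge : κ ≤ #{u // F.parent? u = some v} + 1 := by
    rw [← hreg v, hF.neighborSet_eq]
    exact (mk_union_le _ _).trans (add_le_add_right hpar _)
  have hinf : ℵ₀ ≤ #{u // F.parent? u = some v} := by
    by_contra! h
    exact (add_lt_aleph0 h one_lt_aleph0).not_ge (hκ.trans hge)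
  exact le_antisymm hle (hge.trans_eq (add_one_eq hinf))

theorem IsTree.nonempty_listTree_iso {G : SimpleGraph V} (hG : G.IsTree) (hK : ℵ₀ ≤ #K)
    (hreg : G.CardRegular #K) : Nonempty (listTree K ≃g G) := by
  obtain ⟨v₀⟩ := hG.connected.nonempty
  have hroot : ∀ v, G.parent? v = none ↔ v = (G.connectedComponentMk v₀).out := by
    intro v
    rw [parent?_eq_none_iff, depth_eq_zero_iff,
      ConnectedComponent.sound (hG.connected.preconnected v v₀), eq_comm]
  rw [hG.isAcyclic.eq_parentGraph]
  exact nonempty_listTree_iso_parentGraph _ G.depth _ hroot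
    (fun _ _ => depth_of_parent?_eq_some)
    fun v => Classical.choice
      (Cardinal.eq.mp (hG.isAcyclic.mk_children_eq_of_cardRegular hK hreg v).symm)

end RegularTree

end SimpleGraph

open SimpleGraph

structure ForestFamily (K : Type u) : Type (u + 1) where
  W : K → Type u
  T : ∀ m, SimpleGraph (W m)
  isAcyclic : ∀ m, (T m).IsAcyclic
  noIsolatedVerts : ∀ m, (T m).NoIsolatedVerts
  mk_connectedComponent : ∀ m, #(T m).ConnectedComponent = #K
  mk_supp_le : ∀ m (c : (T m).ConnectedComponent), #c.supp ≤ #K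
  aleph0_le : ℵ₀ ≤ #K

namespace ForestFamily

variable {K : Type u} (Φ : ForestFamily K)

def stageOf : Option (ℕ × K) → ℕ
  | none => 0
  | some (n, _) => n + 1

lemma stageOf_eq_zero_iff {z : Option (ℕ × K)} : stageOf z = 0 ↔ z = none := by
  rcases z with _ | ⟨n, k⟩ <;> simp [stageOf]

lemma stageOf_eq_succ_iff {z : Option (ℕ × K)} {n : ℕ} :
    stageOf z = n + 1 ↔ ∃ k, z = some (n, k) := by
  rcases z with _ | ⟨n, k⟩ <;> simp [stageOf, eq_comm]

noncomputable def componentIndex (m : K) : (Φ.T m).ConnectedComponent ≃ Option (ℕ × K) :=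
  Classical.choice <| Cardinal.eq.mp <| by
    rw [Φ.mk_connectedComponent, mk_option, mk_prod, mk_nat]
    simp [aleph0_mul_eq Φ.aleph0_le, add_one_eq Φ.aleph0_le]

abbrev Child (w : ∀ m, Φ.W m) : Type u := Σ m, {u // (Φ.T m).parent? u = some (w m)}

lemma mk_child_le (w : ∀ m, Φ.W m) : #(Φ.Child w) ≤ #K := by
  refine mk_sigma_le_of_le Φ.aleph0_le le_rfl fun m =>
    le_trans ?_ (Φ.mk_supp_le m ((Φ.T m).connectedComponentMk (w m)))
  have hsupp (u : {u // (Φ.T m).parent? u = some (w m)}) :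
      u.1 ∈ ((Φ.T m).connectedComponentMk (w m)).supp :=
    ConnectedComponent.connectedComponentMk_eq_of_adj (adj_of_parent?_eq_some u.2).symm
  exact mk_le_of_injective (f := fun u => ⟨u.1, hsupp u⟩) fun u u' h =>
    Subtype.ext (by simpa using h)

lemma le_mk_child (w : ∀ m, Φ.W m) (s : Finset K) (hs : ∀ m ∉ s, (Φ.T m).depth (w m) = 0) :
    #K ≤ #{c : Φ.Child w // c.1 ∉ s} := by
  refine le_mk_sigma_of_nonempty Φ.aleph0_le s fun m hm => ?_
  obtain ⟨u, hu⟩ := Φ.noIsolatedVerts m (w m)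
  refine ⟨u, ((Φ.isAcyclic m).adj_iff.mp hu).resolve_right fun h => ?_⟩
  rw [parent?_eq_none_iff.mpr (hs m hm)] at h
  cases h

structure Stage (n : ℕ) : Type (u + 1) where
  A : Type u
  label : A → ∀ m, Φ.W m
  colour : A → Option K
  mk_le : #A ≤ #K
  fresh : ∀ m, {a : A // colour a ≠ some m} → (Φ.T m).ConnectedComponent
  label_fresh : ∀ m a (h : colour a ≠ some m), label a m = (fresh m ⟨a, h⟩).out
  fresh_injective : ∀ m, Function.Injective (fresh m)
  range_fresh : ∀ m, Set.range (fresh m) = {c | stageOf (Φ.componentIndex m c) = n}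

namespace Stage

variable {Φ} {n : ℕ} (S : Φ.Stage n)

lemma depth_label {a : S.A} {m : K} (h : S.colour a ≠ some m) :
    (Φ.T m).depth (S.label a m) = 0 := by
  rw [S.label_fresh m a h]
  exact depth_out _

lemma nonempty : Nonempty S.A := by
  obtain ⟨m⟩ : Nonempty K := (infinite_iff.mpr Φ.aleph0_le).nonempty
  obtain ⟨z, hz⟩ : ∃ z : Option (ℕ × K), stageOf z = n := by
    cases n with
    | zero => exact ⟨none, rfl⟩
    | succ k => exact ⟨some (k, m), rfl⟩
  have : (Φ.componentIndex m).symm z ∈ Set.range (S.fresh m) := by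
    rw [S.range_fresh]
    simpa using hz
  obtain ⟨⟨a, -⟩, -⟩ := this
  exact ⟨a⟩

def Next : Type u := Σ a : S.A, Φ.Child (S.label a)

lemma mk_next_ne (m : K) : #{p : S.Next // p.2.1 ≠ m} = #K := by
  refine le_antisymm ((mk_subtype_le _).trans ?_) ?_
  · exact mk_sigma_le_of_le Φ.aleph0_le S.mk_le fun a => Φ.mk_child_le _
  · obtain ⟨a⟩ := S.nonempty
    classical
    refine (Φ.le_mk_child (S.label a) (insert m (S.colour a).toFinset) fun m' hm' => ?_).trans ?_
    · refine S.depth_label fun h => hm' ?_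
      simp [h]
    · refine mk_le_of_injective
        (f := fun c => ⟨⟨a, c.1⟩, fun h => c.2 (Finset.mem_insert.mpr (Or.inl h))⟩) fun _ _ h => ?_
      exact Subtype.ext (eq_of_heq (Sigma.mk.inj_iff.mp (congrArg Subtype.val h)).2)

noncomputable def nextEquiv (m : K) : {p : S.Next // p.2.1 ≠ m} ≃ K :=
  Classical.choice (Cardinal.eq.mp (S.mk_next_ne m))

noncomputable def nextFresh (m : K) (p : {p : S.Next // p.2.1 ≠ m}) :
    (Φ.T m).ConnectedComponent :=
  (Φ.componentIndex m).symm (some (n, S.nextEquiv m p))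

open Classical in
noncomputable def nextLabel (p : S.Next) (m : K) : Φ.W m :=
  if h : p.2.1 = m then h ▸ p.2.2.1 else (S.nextFresh m ⟨p, h⟩).out

noncomputable def succ : Φ.Stage (n + 1) where
  A := S.Next
  label := S.nextLabel
  colour p := some p.2.1
  mk_le := mk_sigma_le_of_le Φ.aleph0_le S.mk_le fun a => Φ.mk_child_le _
  fresh m p := S.nextFresh m ⟨p.1, fun h => p.2 (congrArg some h)⟩
  label_fresh m p h := dif_neg fun h' => h (congrArg some h')
  fresh_injective m _ _ h := Subtype.ext (by simpa [nextFresh] using h)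
  range_fresh m := by
    ext c
    change _ ↔ stageOf _ = n + 1
    rw [stageOf_eq_succ_iff]
    constructor
    · rintro ⟨p, rfl⟩
      exact ⟨_, (Φ.componentIndex m).apply_symm_apply _⟩
    · rintro ⟨k, hk⟩
      let p := (S.nextEquiv m).symm k
      refine ⟨⟨p.1, fun h => p.2 (Option.some_injective _ h)⟩, ?_⟩
      simp [nextFresh, p, ← hk]

end Stage

noncomputable def stageZero : Φ.Stage 0 where
  A := PUnit
  label _ m := ((Φ.componentIndex m).symm none).out
  colour _ := none
  mk_le := by simpa using one_le_aleph0.trans Φ.aleph0_le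
  fresh m _ := (Φ.componentIndex m).symm none
  label_fresh _ _ _ := rfl
  fresh_injective _ _ _ _ := Subsingleton.elim _ _
  range_fresh m := by
    ext c
    change _ ↔ stageOf _ = 0
    rw [stageOf_eq_zero_iff, ← Equiv.eq_symm_apply, eq_comm]
    exact ⟨fun ⟨_, h⟩ => h, fun h => ⟨⟨PUnit.unit, nofun⟩, h⟩⟩

noncomputable def stage : ∀ n, Φ.Stage n
  | 0 => Φ.stageZero
  | n + 1 => (stage n).succ

def Vert : Type u := Σ n, (Φ.stage n).A

def root : Φ.Vert := ⟨0, PUnit.unit⟩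

def pa : Φ.Vert → Option Φ.Vert
  | ⟨0, _⟩ => none
  | ⟨n + 1, p⟩ => some ⟨n, (p : (Φ.stage n).Next).1⟩

noncomputable def colour (x : Φ.Vert) : Option K := (Φ.stage x.1).colour x.2

noncomputable def label (x : Φ.Vert) (m : K) : Φ.W m := (Φ.stage x.1).label x.2 m

def child (x : Φ.Vert) (c : Φ.Child (Φ.label x)) : Φ.Vert :=
  ⟨x.1 + 1, (⟨x.2, c⟩ : (Φ.stage x.1).Next)⟩

lemma label_child (x : Φ.Vert) (m : K) (u : {u // (Φ.T m).parent? u = some (Φ.label x m)}) :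
    Φ.label (Φ.child x ⟨m, u⟩) m = u.1 :=
  dif_pos rfl

lemma child_injective (x : Φ.Vert) : Function.Injective (Φ.child x) := fun _ _ h =>
  eq_of_heq (Sigma.mk.inj_iff.mp (eq_of_heq (Sigma.mk.inj_iff.mp h).2)).2

variable {Φ}

lemma pa_eq_none_iff {y : Φ.Vert} : Φ.pa y = none ↔ y = Φ.root := by
  rcases y with ⟨_ | n, p⟩
  · exact iff_of_true rfl rfl
  · exact iff_of_false nofun nofun

lemma pa_eq_some_iff {x y : Φ.Vert} : Φ.pa y = some x ↔ ∃ c, y = Φ.child x c := by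
  refine ⟨fun h => ?_, fun ⟨c, h⟩ => h ▸ rfl⟩
  rcases y with ⟨_ | n, p⟩
  · cases h
  · cases h
    exact ⟨p.2, rfl⟩

lemma level_of_pa {x y : Φ.Vert} (h : Φ.pa y = some x) : y.1 = x.1 + 1 := by
  obtain ⟨c, rfl⟩ := pa_eq_some_iff.mp h
  rfl

lemma exists_colour_of_pa {x y : Φ.Vert} (h : Φ.pa y = some x) : ∃ m, Φ.colour y = some m := by
  obtain ⟨c, rfl⟩ := pa_eq_some_iff.mp h
  exact ⟨c.1, rfl⟩

lemma exists_child_of_colour_eq_some {y : Φ.Vert} {m : K} (h : Φ.colour y = some m) :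
    ∃ x u, y = Φ.child x ⟨m, u⟩ := by
  rcases y with ⟨_ | n, a, m', u⟩
  · cases h
  · cases h
    exact ⟨⟨n, a⟩, u, rfl⟩

noncomputable def fresh {x : Φ.Vert} {m : K} (h : Φ.colour x ≠ some m) :
    (Φ.T m).ConnectedComponent :=
  (Φ.stage x.1).fresh m ⟨x.2, h⟩

lemma label_eq_out_fresh {x : Φ.Vert} {m : K} (h : Φ.colour x ≠ some m) :
    Φ.label x m = (fresh h).out :=
  (Φ.stage x.1).label_fresh m x.2 h

lemma depth_label {x : Φ.Vert} {m : K} (h : Φ.colour x ≠ some m) :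
    (Φ.T m).depth (Φ.label x m) = 0 :=
  (Φ.stage x.1).depth_label h

lemma stageOf_fresh {x : Φ.Vert} {m : K} (h : Φ.colour x ≠ some m) :
    stageOf (Φ.componentIndex m (fresh h)) = x.1 := by
  have : fresh h ∈ Set.range ((Φ.stage x.1).fresh m) := ⟨_, rfl⟩
  rwa [(Φ.stage x.1).range_fresh] at this

lemma eq_of_fresh_eq {x y : Φ.Vert} {m : K} (hx : Φ.colour x ≠ some m) (hy : Φ.colour y ≠ some m)
    (h : fresh hx = fresh hy) : x = y := by
  obtain ⟨n, a⟩ := x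
  obtain ⟨n', b⟩ := y
  obtain rfl : n = n' := (stageOf_fresh hx).symm.trans (h ▸ stageOf_fresh hy)
  exact congrArg (Sigma.mk n) (congrArg Subtype.val ((Φ.stage n).fresh_injective m h))

lemma exists_fresh_eq (m : K) (c : (Φ.T m).ConnectedComponent) :
    ∃ x, ∃ h : Φ.colour x ≠ some m, fresh h = c := by
  have : c ∈ Set.range ((Φ.stage (stageOf (Φ.componentIndex m c))).fresh m) := by
    rw [Stage.range_fresh]
    rfl
  obtain ⟨⟨a, ha⟩, hc⟩ := this
  exact ⟨⟨_, a⟩, ha, hc⟩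

variable (Φ)

open Classical in
lemma parent?_label (m : K) (y : Φ.Vert) :
    (Φ.T m).parent? (Φ.label y m) =
      (if Φ.colour y = some m then Φ.pa y else none).map (Φ.label · m) := by
  split_ifs with h
  · obtain ⟨x, u, rfl⟩ := exists_child_of_colour_eq_some h
    rw [label_child]
    exact u.2
  · exact parent?_eq_none_iff.mpr (depth_label h)

lemma label_injective (m : K) : Function.Injective (Φ.label · m) := by
  suffices ∀ d x y, (Φ.T m).depth (Φ.label x m) = d → Φ.label x m = Φ.label y m → x = y from
    fun x y => this _ x y rfl
  intro d
  induction d with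
  | zero =>
    intro x y hd h
    have hcol {z : Φ.Vert} (hz : (Φ.T m).depth (Φ.label z m) = 0) : Φ.colour z ≠ some m := by
      intro hc
      obtain ⟨x, u, rfl⟩ := exists_child_of_colour_eq_some hc
      rw [label_child] at hz
      exact (parent?_eq_some_iff.mp u.2).1 hz
    have hx := hcol hd
    have hy := hcol (h ▸ hd)
    refine eq_of_fresh_eq hx hy ?_
    rw [label_eq_out_fresh hx, label_eq_out_fresh hy] at h
    simpa only [connectedComponentMk_out] using congrArg (Φ.T m).connectedComponentMk h
  | succ d ih =>
    intro x y hd h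
    have hcol {z : Φ.Vert} (hz : (Φ.T m).depth (Φ.label z m) = d + 1) : Φ.colour z = some m := by
      by_contra hc
      rw [depth_label hc] at hz
      cases hz
    obtain ⟨x', u, rfl⟩ := exists_child_of_colour_eq_some (hcol hd)
    obtain ⟨y', u', rfl⟩ := exists_child_of_colour_eq_some (hcol (h ▸ hd))
    rw [label_child, label_child] at h
    rw [label_child] at hd
    have hpar : Φ.label x' m = Φ.label y' m := Option.some_injective _ (u.2.symm.trans (h ▸ u'.2))
    obtain rfl := ih x' y' (by have := depth_of_parent?_eq_some u.2; omega) hpar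
    rw [Subtype.ext h]

lemma label_surjective (m : K) : Function.Surjective (Φ.label · m) := by
  suffices ∀ d (u : Φ.W m), (Φ.T m).depth u = d → ∃ x, Φ.label x m = u from
    fun u => this _ u rfl
  intro d
  induction d with
  | zero =>
    intro u hu
    obtain ⟨x, hx, hc⟩ := exists_fresh_eq m ((Φ.T m).connectedComponentMk u)
    exact ⟨x, by rw [label_eq_out_fresh hx, hc, depth_eq_zero_iff.mp hu]⟩
  | succ d ih =>
    intro u hu
    have hpar : (Φ.T m).parent? u = some ((Φ.T m).parent u) :=
      parent?_eq_some_iff.mpr ⟨by omega, rfl⟩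
    obtain ⟨x, hx⟩ := ih ((Φ.T m).parent u) (by have := depth_of_parent?_eq_some hpar; omega)
    exact ⟨Φ.child x ⟨m, u, hx ▸ hpar⟩, Φ.label_child x m _⟩

noncomputable def labelEquiv (m : K) : Φ.Vert ≃ Φ.W m :=
  Equiv.ofBijective _ ⟨Φ.label_injective m, Φ.label_surjective m⟩

theorem nonempty_colourClass_iso (m : K) :
    Nonempty (colourClass Φ.pa Φ.colour m ≃g Φ.T m) := by
  rw [(Φ.isAcyclic m).eq_parentGraph]
  exact ⟨parentGraphIso (Φ.labelEquiv m) (Φ.parent?_label m)⟩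

noncomputable def childEquiv (x : Φ.Vert) : Φ.Child (Φ.label x) ≃ {y // Φ.pa y = some x} :=
  Equiv.ofBijective (fun c => ⟨Φ.child x c, rfl⟩)
    ⟨fun _ _ h => Φ.child_injective x (congrArg Subtype.val h), fun ⟨_, hy⟩ =>
      let ⟨c, hc⟩ := pa_eq_some_iff.mp hy
      ⟨c, Subtype.ext hc.symm⟩⟩

lemma mk_children (x : Φ.Vert) : #{y // Φ.pa y = some x} = #K := by
  classical
  rw [← mk_congr (Φ.childEquiv x)]
  refine le_antisymm (Φ.mk_child_le _) ?_
  refine (Φ.le_mk_child _ (Φ.colour x).toFinset fun m hm => depth_label ?_).trans (mk_subtype_le _)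
  simpa using hm

theorem nonempty_listTree_iso : Nonempty (listTree K ≃g parentGraph Φ.pa) :=
  nonempty_listTree_iso_parentGraph Φ.pa Sigma.fst Φ.root (fun _ => pa_eq_none_iff)
    (fun _ _ => level_of_pa) fun x => Classical.choice (Cardinal.eq.mp (Φ.mk_children x).symm)

theorem isFactorization : (parentGraph Φ.pa).IsFactorization (colourClass Φ.pa Φ.colour) :=
  isFactorization_colourClass Φ.pa Φ.colour Sigma.fst (fun _ _ => level_of_pa)
    fun _ _ => exists_colour_of_pa

end ForestFamily

/-- The κ-regular tree admits a `T`-factorization for every family `T` of `κ` forests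
without isolated vertices, each with `κ` components of order at most `κ`. -/
theorem stmt_4 (κ : Cardinal.{u}) (hκ : ℵ₀ ≤ κ)
    (W : κ.ord.ToType → Type u) (T : ∀ m, SimpleGraph (W m))
    (hac : ∀ m, (T m).IsAcyclic) (hni : ∀ m, (T m).NoIsolatedVerts)
    (hcomp : ∀ m, #((T m).ConnectedComponent) = κ)
    (hord : ∀ m (c : (T m).ConnectedComponent), #c.supp ≤ κ)
    {V : Type u} (G : SimpleGraph V) (htree : G.IsTree) (hreg : G.CardRegular κ) :
    ∃ F : κ.ord.ToType → SimpleGraph V, G.IsFactorization F ∧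
      ∀ m, Nonempty (F m ≃g T m) := by
  have hK : #κ.ord.ToType = κ := by simp
  let Φ : ForestFamily κ.ord.ToType :=
    ⟨W, T, hac, hni, fun m => (hcomp m).trans hK.symm, fun m c => (hord m c).trans hK.ge,
      hκ.trans hK.ge⟩
  obtain ⟨eG⟩ := htree.nonempty_listTree_iso Φ.aleph0_le fun v => (hreg v).trans hK.symm
  obtain ⟨eX⟩ := Φ.nonempty_listTree_iso
  let e := eG.symm.trans eX
  refine ⟨fun m => (colourClass Φ.pa Φ.colour m).comap e, Φ.isFactorization.comap e, fun m => ?_⟩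
  obtain ⟨eT⟩ := Φ.nonempty_colourClass_iso m
  exact ⟨(Iso.comap e.toEquiv _).trans eT⟩
end

section
/- Let κ be an infinite cardinal and let T be any tree of order κ. Then there is a decomposition of the complete graph K_κ on κ vertices into κ pairwise edge-disjoint subgraphs, each isomorphic to T, whose edge sets partition E(K_κ). -/
open Cardinal

universe u

/-!
Enumerate, in order type `κ`, the requirements "vertex `t` of copy `c` is placed" and "the edge
`xy` is covered", and meet them one at a time by transfinite recursion, keeping a partial packing
of fewer than `κ` placements. A vertex is placed at a point of `K_κ` used by no copy so far, so
all edges it creates are new; an uncovered edge `xy` is covered by starting an unused copy with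
some edge of `T` mapped onto `xy`.
-/

open Set Function

namespace Cardinal

theorem mk_iUnion_lt_of_finite {α ι : Type u} {κ : Cardinal.{u}} (hκ : ℵ₀ ≤ κ)
    {f : ι → Set α} (hι : #ι < κ) (hf : ∀ i, (f i).Finite) : #(⋃ i, f i) < κ := by
  rcases finite_or_infinite ι with hfin | hinf
  · exact (finite_iUnion hf).lt_aleph0.trans_le hκ
  · calc #(⋃ i, f i) ≤ #ι * ⨆ i, #(f i) := mk_iUnion_le f
      _ ≤ #ι * ℵ₀ := by gcongr; exact ciSup_le' fun i => (hf i).lt_aleph0.le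
      _ = #ι := mul_aleph0_eq (aleph0_le_mk ι)
      _ < κ := hι

theorem exists_forall_of_finite_extension_of_mk_Iio_lt {α I : Type u} [LinearOrder I]
    [WellFoundedLT I] {κ : Cardinal.{u}} (hκ : ℵ₀ ≤ κ) (hI : ∀ i : I, #(Iio i) < κ)
    {p : Set α → Prop} {q : I → Set α → Prop}
    (hp : ∀ S, IsChain (· ⊆ ·) S → (∀ P ∈ S, p P) → p (⋃₀ S)) (hq : ∀ i, Monotone (q i))
    (hext : ∀ P, p P → #P < κ → ∀ i, ∃ Δ : Set α, Δ.Finite ∧ p (P ∪ Δ) ∧ q i (P ∪ Δ)) :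
    ∃ P, p P ∧ ∀ i, q i P := by
  choose! ext hext_fin hext_p hext_q using hext
  -- Stages are unions of finite increments, so each stage stays smaller than `κ` even when
  -- `κ` is singular.
  let inc : I → Set α := WellFoundedLT.fix fun i inc => ext (⋃ j : Iio i, inc j j.2) i
  let before (i : I) : Set α := ⋃ j : Iio i, inc j
  let stage (i : I) : Set α := before i ∪ inc i
  have inc_eq (i : I) : inc i = ext (before i) i := WellFoundedLT.fix_eq _ i
  have stage_subset {i j : I} (h : i < j) : stage i ⊆ before j := by
    rintro a (ha | ha)
    · obtain ⟨⟨k, hk⟩, ha⟩ := mem_iUnion.1 ha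
      exact mem_iUnion.2 ⟨⟨k, lt_trans hk h⟩, ha⟩
    · exact mem_iUnion.2 ⟨⟨i, h⟩, ha⟩
  have stage_mono : Monotone stage := fun i j h => h.lt_or_eq.elim
    (fun h => (stage_subset h).trans subset_union_left) (fun h => h ▸ le_rfl)
  have before_eq (i : I) : before i = ⋃₀ (stage '' Iio i) := by
    refine subset_antisymm (iUnion_subset fun j => ?_) (sUnion_subset ?_)
    · exact subset_union_right.trans (subset_sUnion_of_mem ⟨j, j.2, rfl⟩)
    · rintro _ ⟨j, hj, rfl⟩
      exact stage_subset hj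
  have key (i : I) : (inc i).Finite ∧ p (stage i) ∧ q i (stage i) := by
    induction i using WellFoundedLT.induction with
    | ind i ih =>
      have hbefore : p (before i) := by
        rw [before_eq]
        refine hp _ (stage_mono.isChain_image (isChain_of_trichotomous _)) ?_
        rintro _ ⟨j, hj, rfl⟩
        exact (ih j hj).2.1
      have hcard : #(before i) < κ :=
        mk_iUnion_lt_of_finite hκ (hI i) fun j => (ih j j.2).1
      simp only [stage, inc_eq i]
      exact ⟨hext_fin _ hbefore hcard i, hext_p _ hbefore hcard i, hext_q _ hbefore hcard i⟩
  refine ⟨⋃₀ range stage, hp _ stage_mono.isChain_range ?_, fun i => ?_⟩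
  · rintro _ ⟨i, rfl⟩
    exact (key i).2.1
  · exact hq i (subset_sUnion_of_mem ⟨i, rfl⟩) (key i).2.2

theorem exists_forall_of_finite_extension {α τ : Type u} {κ : Cardinal.{u}} (hκ : ℵ₀ ≤ κ)
    (hτ : #τ ≤ κ) {p : Set α → Prop} {q : τ → Set α → Prop}
    (hp : ∀ S, IsChain (· ⊆ ·) S → (∀ P ∈ S, p P) → p (⋃₀ S)) (hq : ∀ a, Monotone (q a))
    (hext : ∀ P, p P → #P < κ → ∀ a, ∃ Δ : Set α, Δ.Finite ∧ p (P ∪ Δ) ∧ q a (P ∪ Δ)) :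
    ∃ P, p P ∧ ∀ a, q a P := by
  rcases isEmpty_or_nonempty τ with hτ₀ | hτ₀
  · exact ⟨_, hp ∅ IsChain.empty (by simp), isEmptyElim⟩
  obtain ⟨f⟩ : Nonempty (τ ↪ κ.ord.ToType) := by rwa [← le_def, mk_ord_toType]
  obtain ⟨P, hP, hPq⟩ := exists_forall_of_finite_extension_of_mk_Iio_lt hκ
    (fun i => (mk_Iio_lt i (by simp)).trans_eq (mk_ord_toType κ)) hp
    (fun i => hq (invFun f i)) fun P hP hcard i => hext P hP hcard _
  refine ⟨P, hP, fun a => ?_⟩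
  simpa [leftInverse_invFun f.injective a] using hPq (f a)

end Cardinal

namespace SimpleGraph

variable {ι V W : Type u} (T : SimpleGraph W)

/-- `(c, t, x) ∈ P` means that the `c`-th copy of `T` places its vertex `t` at `x`. -/
def copyEdges (P : Set (ι × W × V)) (c : ι) : Set (Sym2 V) :=
  {e | ∃ t u x y, T.Adj t u ∧ (c, t, x) ∈ P ∧ (c, u, y) ∈ P ∧ s(x, y) = e}

structure IsPartialPacking (P : Set (ι × W × V)) : Prop where
  functional : ∀ ⦃c t x y⦄, (c, t, x) ∈ P → (c, t, y) ∈ P → x = y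
  injective : ∀ ⦃c t u x⦄, (c, t, x) ∈ P → (c, u, x) ∈ P → t = u
  pairwise_disjoint : Pairwise (Disjoint on copyEdges T P)

variable {T} {P Q : Set (ι × W × V)}

theorem copyEdges_mono (h : P ⊆ Q) (c : ι) : copyEdges T P c ⊆ copyEdges T Q c := by
  rintro _ ⟨t, u, x, y, htu, hx, hy, rfl⟩
  exact ⟨t, u, x, y, htu, h hx, h hy, rfl⟩

theorem copyEdges_insert_of_ne {c c' : ι} (t : W) (x : V) (h : c' ≠ c) :
    copyEdges T (insert (c, t, x) P) c' = copyEdges T P c' := by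
  refine subset_antisymm ?_ (copyEdges_mono (subset_insert _ _) c')
  rintro _ ⟨t', u', x', y', htu, hx, hy, rfl⟩
  simp only [mem_insert_iff, Prod.mk.injEq, h, false_and, false_or] at hx hy
  exact ⟨t', u', x', y', htu, hx, hy, rfl⟩

theorem copyEdges_insert_subset (c : ι) (t : W) (x : V) :
    copyEdges T (insert (c, t, x) P) c ⊆
      copyEdges T P c ∪ {e | ∃ u y, T.Adj t u ∧ (c, u, y) ∈ P ∧ s(x, y) = e} := by
  rintro _ ⟨t', u', x', y', htu, hx, hy, rfl⟩
  simp only [mem_insert_iff, Prod.mk.injEq, true_and] at hx hy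
  rcases hx with ⟨rfl, rfl⟩ | hx <;> rcases hy with ⟨rfl, rfl⟩ | hy
  · exact absurd htu (T.loopless.irrefl _)
  · exact Or.inr ⟨u', y', htu, hy, rfl⟩
  · exact Or.inr ⟨t', x', htu.symm, hx, Sym2.eq_swap⟩
  · exact Or.inl ⟨t', u', x', y', htu, hx, hy, rfl⟩

theorem IsPartialPacking.insert (hP : IsPartialPacking T P) {c : ι} {t : W} {x : V}
    (ht : ∀ y, (c, t, y) ∉ P) (hx : ∀ u, (c, u, x) ∉ P)
    (hnew : ∀ u y, T.Adj t u → (c, u, y) ∈ P → ∀ c' ≠ c, s(x, y) ∉ copyEdges T P c') :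
    IsPartialPacking T (insert (c, t, x) P) where
  functional := by
    intro c₁ t₁ x₁ y₁ h₁ h₂
    simp only [mem_insert_iff, Prod.mk.injEq] at h₁ h₂
    grind [hP.functional]
  injective := by
    intro c₁ t₁ u₁ x₁ h₁ h₂
    simp only [mem_insert_iff, Prod.mk.injEq] at h₁ h₂
    grind [hP.injective]
  pairwise_disjoint := by
    have key : ∀ c', c' ≠ c → Disjoint (copyEdges T (Insert.insert (c, t, x) P) c)
        (copyEdges T (Insert.insert (c, t, x) P) c') := by
      intro c' hc'
      rw [copyEdges_insert_of_ne t x hc']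
      refine Set.disjoint_left.2 fun e he he' => ?_
      rcases copyEdges_insert_subset c t x he with he | ⟨u, y, htu, hy, rfl⟩
      · exact Set.disjoint_left.1 (hP.pairwise_disjoint hc'.symm) he he'
      · exact hnew u y htu hy c' hc' he'
    intro c₁ c₂ h
    by_cases h₁ : c₁ = c
    · subst h₁; exact key c₂ (Ne.symm h)
    by_cases h₂ : c₂ = c
    · subst h₂; exact (key c₁ h).symm
    simpa only [onFun, copyEdges_insert_of_ne t x h₁, copyEdges_insert_of_ne t x h₂]
      using hP.pairwise_disjoint h

theorem IsPartialPacking.sUnion {S : Set (Set (ι × W × V))} (hS : IsChain (· ⊆ ·) S)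
    (h : ∀ P ∈ S, IsPartialPacking T P) : IsPartialPacking T (⋃₀ S) := by
  have common {a : ι × W × V} (F : Set (ι × W × V)) (ha : a ∈ F) (hF : F.Finite)
      (hFS : F ⊆ ⋃₀ S) : ∃ P, IsPartialPacking T P ∧ F ⊆ P := by
    obtain ⟨P₀, hP₀, -⟩ := mem_sUnion.1 (hFS ha)
    obtain ⟨P, hP, hFP⟩ :=
      hS.directedOn.exists_mem_subset_of_finite_of_subset_sUnion ⟨P₀, hP₀⟩ hF hFS
    exact ⟨P, h P hP, hFP⟩
  refine ⟨fun c t x y hx hy => ?_, fun c t u x hx hy => ?_, fun c₁ c₂ hc => ?_⟩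
  · obtain ⟨P, hP, hsub⟩ := common {(c, t, x), (c, t, y)} (mem_insert _ _) (toFinite _)
      (by simp [insert_subset_iff, hx, hy])
    simp only [insert_subset_iff, singleton_subset_iff] at hsub
    exact hP.functional hsub.1 hsub.2
  · obtain ⟨P, hP, hsub⟩ := common {(c, t, x), (c, u, x)} (mem_insert _ _) (toFinite _)
      (by simp [insert_subset_iff, hx, hy])
    simp only [insert_subset_iff, singleton_subset_iff] at hsub
    exact hP.injective hsub.1 hsub.2
  · refine Set.disjoint_left.2 ?_
    rintro _ ⟨t, u, x, y, htu, hx, hy, rfl⟩ ⟨t', u', x', y', htu', hx', hy', he⟩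
    obtain ⟨P, hP, hsub⟩ := common {(c₁, t, x), (c₁, u, y), (c₂, t', x'), (c₂, u', y')}
      (mem_insert _ _) (toFinite _) (by simp [insert_subset_iff, hx, hy, hx', hy'])
    simp only [insert_subset_iff, singleton_subset_iff] at hsub
    exact Set.disjoint_left.1 (hP.pairwise_disjoint hc) ⟨t, u, x, y, htu, hsub.1, hsub.2.1, rfl⟩
      ⟨t', u', x', y', htu', hsub.2.2.1, hsub.2.2.2, he⟩

theorem IsPartialPacking.exists_finite_extension_mem (hP : IsPartialPacking T P)
    (hcard : #P < #V) (c : ι) (t : W) :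
    ∃ Δ : Set (ι × W × V), Δ.Finite ∧ IsPartialPacking T (P ∪ Δ) ∧ ∃ x, (c, t, x) ∈ P ∪ Δ := by
  by_cases hmem : ∃ x, (c, t, x) ∈ P
  · exact ⟨∅, finite_empty, by simpa using hP, by simpa using hmem⟩
  push Not at hmem
  obtain ⟨x, hx⟩ : (Prod.snd ∘ Prod.snd '' P)ᶜ.Nonempty :=
    compl_nonempty_of_mk_lt_mk (mk_image_le.trans_lt hcard)
  refine ⟨{(c, t, x)}, finite_singleton _, ?_, x, Or.inr rfl⟩
  rw [union_singleton]
  refine hP.insert hmem (fun u hu => hx ⟨_, hu, rfl⟩) ?_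
  rintro u y - - c' - ⟨t', u', x', y', -, hx', hy', he⟩
  rcases Sym2.eq_iff.1 he with ⟨rfl, -⟩ | ⟨-, rfl⟩
  · exact hx ⟨_, hx', rfl⟩
  · exact hx ⟨_, hy', rfl⟩

theorem IsPartialPacking.exists_finite_extension_mem_copyEdges (hP : IsPartialPacking T P)
    (hcard : #P < #ι) {r r' : W} (hr : T.Adj r r') {x y : V} (hxy : x ≠ y) :
    ∃ Δ : Set (ι × W × V), Δ.Finite ∧ IsPartialPacking T (P ∪ Δ) ∧
      ∃ c, s(x, y) ∈ copyEdges T (P ∪ Δ) c := by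
  by_cases hcov : ∃ c, s(x, y) ∈ copyEdges T P c
  · exact ⟨∅, finite_empty, by simpa using hP, by simpa using hcov⟩
  push Not at hcov
  obtain ⟨c, hc⟩ : (Prod.fst '' P)ᶜ.Nonempty :=
    compl_nonempty_of_mk_lt_mk (mk_image_le.trans_lt hcard)
  have hfresh (t : W) (z : V) : (c, t, z) ∉ P := fun h => hc ⟨_, h, rfl⟩
  have h₁ := hP.insert (hfresh r) (fun u => hfresh u x) fun u z _ h => (hfresh u z h).elim
  refine ⟨{(c, r', y), (c, r, x)}, toFinite _, ?_, c, r, r', x, y, hr, ?_, ?_, rfl⟩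
  · rw [union_insert, union_singleton]
    refine h₁.insert ?_ ?_ ?_
    · rintro z (h | h)
      · simp only [Prod.mk.injEq] at h
        exact hr.ne h.2.1.symm
      · exact hfresh _ _ h
    · rintro u (h | h)
      · simp only [Prod.mk.injEq] at h
        exact hxy h.2.2.symm
      · exact hfresh _ _ h
    · rintro u z - (h | h) c' hc'
      · simp only [Prod.mk.injEq] at h
        obtain ⟨-, -, rfl⟩ := h
        rw [copyEdges_insert_of_ne r z hc', Sym2.eq_swap]
        exact hcov c'
      · exact (hfresh _ _ h).elim
  · simp
  · simp

theorem IsPartialPacking.copyEdges_eq_image (hP : IsPartialPacking T P) {c : ι} {φ : W → V}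
    (hφ : ∀ t, (c, t, φ t) ∈ P) : copyEdges T P c = Sym2.map φ '' T.edgeSet := by
  refine subset_antisymm ?_ ?_
  · rintro _ ⟨t, u, x, y, htu, hx, hy, rfl⟩
    rw [hP.functional hx (hφ t), hP.functional hy (hφ u)]
    exact ⟨s(t, u), htu, rfl⟩
  · rintro _ ⟨e, he, rfl⟩
    induction e with
    | h t u => exact ⟨t, u, φ t, φ u, he, hφ t, hφ u, rfl⟩

theorem exists_total_isPartialPacking_covering (hV : ℵ₀ ≤ #V) (hι : #ι = #V) (hW : #W ≤ #V)
    {r r' : W} (hr : T.Adj r r') :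
    ∃ P : Set (ι × W × V), IsPartialPacking T P ∧ (∀ c t, ∃ x, (c, t, x) ∈ P) ∧
      ∀ x y, x ≠ y → ∃ c, s(x, y) ∈ copyEdges T P c := by
  have hτ : #((ι × W) ⊕ (V × V)) ≤ #V := calc
    #((ι × W) ⊕ (V × V)) = #ι * #W + #V * #V := by simp
    _ ≤ #V * #V + #V * #V := by gcongr; exact hι.le
    _ = #V := by rw [mul_eq_self hV, add_eq_self hV]
  let req : (ι × W) ⊕ (V × V) → Set (ι × W × V) → Prop := Sum.elim
    (fun ct Q => ∃ x, (ct.1, ct.2, x) ∈ Q)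
    (fun xy Q => xy.1 ≠ xy.2 → ∃ c, s(xy.1, xy.2) ∈ copyEdges T Q c)
  have req_mono (a) : Monotone (req a) := by
    rcases a with ⟨c, t⟩ | ⟨x, y⟩
    · rintro Q Q' hQ ⟨x, hx⟩
      exact ⟨x, hQ hx⟩
    · intro Q Q' hQ h hxy
      obtain ⟨c, hc⟩ := h hxy
      exact ⟨c, copyEdges_mono hQ c hc⟩
  have req_extend (Q : Set (ι × W × V)) (hQ : IsPartialPacking T Q) (hcard : #Q < #V) (a) :
      ∃ Δ : Set (ι × W × V), Δ.Finite ∧ IsPartialPacking T (Q ∪ Δ) ∧ req a (Q ∪ Δ) := by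
    rcases a with ⟨c, t⟩ | ⟨x, y⟩
    · exact hQ.exists_finite_extension_mem hcard c t
    · by_cases hxy : x = y
      · exact ⟨∅, finite_empty, by simpa using hQ, fun h => (h hxy).elim⟩
      · obtain ⟨Δ, hΔ, hQΔ, hcov⟩ :=
          hQ.exists_finite_extension_mem_copyEdges (hcard.trans_eq hι.symm) hr hxy
        exact ⟨Δ, hΔ, hQΔ, fun _ => hcov⟩
  obtain ⟨P, hP, hreq⟩ := exists_forall_of_finite_extension hV hτ
    (fun _ => IsPartialPacking.sUnion) req_mono req_extend
  exact ⟨P, hP, fun c t => hreq (.inl (c, t)), fun x y => hreq (.inr (x, y))⟩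

theorem exists_decomposition_top (hV : ℵ₀ ≤ #V) (hι : #ι = #V) (hW : #W ≤ #V) {r r' : W}
    (hr : T.Adj r r') :
    ∃ F : ι → (⊤ : SimpleGraph V).Subgraph,
      (Pairwise fun i j => Disjoint (F i).edgeSet (F j).edgeSet) ∧
      (∀ i, Nonempty ((F i).coe ≃g T)) ∧
      (⋃ i, (F i).edgeSet) = (⊤ : SimpleGraph V).edgeSet := by
  obtain ⟨P, hP, htotal, hcover⟩ := exists_total_isPartialPacking_covering (ι := ι) hV hι hW hr
  choose φ hφ using htotal
  have hinj (c : ι) : Injective (φ c) := fun t u h => hP.injective (hφ c t) (h ▸ hφ c u)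
  let f (c : ι) : Copy T ⊤ := Hom.toCopy ⟨φ c, fun h => (hinj c).ne h.ne⟩ (hinj c)
  have hedges (c : ι) : (f c).toSubgraph.edgeSet = copyEdges T P c := by
    rw [hP.copyEdges_eq_image (hφ c)]
    simp [f]
  refine ⟨fun c => (f c).toSubgraph, ?_, fun c => ⟨(f c).isoToSubgraph.symm⟩, ?_⟩
  · simpa only [hedges] using hP.pairwise_disjoint
  · refine subset_antisymm (iUnion_subset fun c => Subgraph.edgeSet_subset _) fun e he => ?_
    induction e with
    | h x y =>
      obtain ⟨c, hc⟩ := hcover x y he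
      exact mem_iUnion.2 ⟨c, (hedges c).symm ▸ hc⟩

end SimpleGraph

/-- Infinite Ringel: for every tree `T` of order `κ`, the complete graph `K_κ` decomposes
into `κ` pairwise edge-disjoint copies of `T`. -/
theorem stmt_7 (κ : Cardinal.{u}) (hκ : ℵ₀ ≤ κ) {W : Type u} (T : SimpleGraph W)
    (htree : T.IsTree) (hW : #W = κ) :
    ∃ F : κ.ord.ToType → (⊤ : SimpleGraph κ.ord.ToType).Subgraph,
      (Pairwise fun i j => Disjoint (F i).edgeSet (F j).edgeSet) ∧
      (∀ i, Nonempty ((F i).coe ≃g T)) ∧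
      (⋃ i, (F i).edgeSet) = (⊤ : SimpleGraph κ.ord.ToType).edgeSet := by
  have hV : #κ.ord.ToType = κ := mk_ord_toType κ
  have : Nontrivial W := by
    rw [← one_lt_iff_nontrivial, hW]
    exact one_lt_aleph0.trans_le hκ
  obtain ⟨r, hr⟩ :=
    htree.connected.preconnected.exists_adj_of_nontrivial (Classical.arbitrary W)
  exact SimpleGraph.exists_decomposition_top (hκ.trans_eq hV.symm) rfl (hW.trans hV.symm).le hr
end

section
/- Let κ be an infinite cardinal and let T' be a family of at most κ pairwise non-isomorphic trees, each of order at most κ and of order at least 2. Then T' packs into K_κ: there exist pairwise edge-disjoint subgraphs of K_κ, one isomorphic to each member of T'. -/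
open Cardinal

universe u

/-!
Once `κ` is infinite the packing can even be taken vertex-disjoint: the disjoint union of the
trees has at most `κ · κ = κ` vertices, so it embeds into the vertex set of `K_κ`, and the
image of each tree is a copy of it.
-/

open SimpleGraph

theorem Cardinal.mk_sigma_le_of_le_s8 {κ : Cardinal.{u}} (hκ : ℵ₀ ≤ κ) {ι : Type u}
    {W : ι → Type u} (hι : #ι ≤ κ) (hW : ∀ i, #(W i) ≤ κ) : #(Σ i, W i) ≤ κ :=
  calc #(Σ i, W i) ≤ sum fun _ : ι => κ := (mk_sigma W).trans_le (sum_le_sum _ _ hW)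
    _ = #ι * κ := sum_const' _ _
    _ ≤ κ * κ := mul_le_mul_left hι κ
    _ = κ := mul_eq_self hκ

theorem SimpleGraph.exists_edgeDisjoint_isos_of_sigma_embedding {V ι : Type*} {W : ι → Type*}
    (T : ∀ i, SimpleGraph (W i)) (f : (Σ i, W i) ↪ V) :
    ∃ F : ι → (⊤ : SimpleGraph V).Subgraph,
      (Pairwise fun i j => Disjoint (F i).edgeSet (F j).edgeSet) ∧
      ∀ i, Nonempty ((F i).coe ≃g T i) := by
  let c i : Copy (T i) ⊤ :=
    (Embedding.completeGraph ((Function.Embedding.sigmaMk i).trans f)).toCopy.comp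
      (Copy.ofLE _ _ le_top)
  refine ⟨fun i => (c i).toSubgraph, fun i j hij => ?_, fun i => ⟨(c i).isoToSubgraph.symm⟩⟩
  have hverts : Disjoint (c i).toSubgraph.verts (c j).toSubgraph.verts := by
    rw [Set.disjoint_left]
    rintro _ ⟨a, -, rfl⟩ ⟨b, -, hba⟩
    exact hij (congrArg Sigma.fst (f.injective hba)).symm
  exact (Subgraph.disjoint_verts_iff_disjoint.mp hverts).edgeSet

theorem stmt_8_general (κ : Cardinal.{u}) (hκ : ℵ₀ ≤ κ) {ι : Type u} (hι : #ι ≤ κ)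
    (W : ι → Type u) (T : ∀ i, SimpleGraph (W i))
    (hle : ∀ i, #(W i) ≤ κ) :
    ∃ F : ∀ i : ι, (⊤ : SimpleGraph κ.ord.ToType).Subgraph,
      (Pairwise fun i j => Disjoint (F i).edgeSet (F j).edgeSet) ∧
      ∀ i, Nonempty ((F i).coe ≃g T i) := by
  have hcard : #(Σ i, W i) ≤ #κ.ord.ToType := by
    rw [mk_ord_toType]
    exact mk_sigma_le_of_le_s8 hκ hι hle
  obtain ⟨f⟩ := hcard
  exact exists_edgeDisjoint_isos_of_sigma_embedding T f

/-- Infinite Gyárfás: every family of at most `κ` pairwise non-isomorphic trees, each of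
order at least `2` and at most `κ`, packs into `K_κ`. -/
theorem stmt_8 (κ : Cardinal.{u}) (hκ : ℵ₀ ≤ κ) {ι : Type u} (hι : #ι ≤ κ)
    (W : ι → Type u) (T : ∀ i, SimpleGraph (W i)) (htree : ∀ i, (T i).IsTree)
    (h2 : ∀ i, 2 ≤ #(W i)) (hle : ∀ i, #(W i) ≤ κ)
    (hnoniso : Pairwise fun i j => IsEmpty ((T i) ≃g (T j))) :
    ∃ F : ∀ i : ι, (⊤ : SimpleGraph κ.ord.ToType).Subgraph,
      (Pairwise fun i j => Disjoint (F i).edgeSet (F j).edgeSet) ∧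
      ∀ i, Nonempty ((F i).coe ≃g T i) :=
  stmt_8_general κ hκ hι W T hle
end

section
/- Let κ be an infinite cardinal, let G be a graph with vertex enumeration (v_i : i < κ), and suppose {C_j^m : j, m < κ} is a family of sets of vertices satisfying: (1) C_j^m ⊆ N(v_j) ∩ {v_i : i > j}; (2) C_i^m ∩ C_j^m = ∅ for i ≠ j; (3) C_j^m ∩ C_j^n = ∅ for m ≠ n; (4) |C_j^m| = κ; and (5) whenever v_j v_i ∈ E(G) with i > j, there exists m < κ with v_i ∈ C_j^m. Then the graphs F^m defined by E(F^m) = {v_j v_i : v_i ∈ C_j^m, j < i < κ} on vertex set V(G) form a factorization of G into κ spanning κ-regular forests. -/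
open Cardinal

universe u

/-! In `F^m` the neighbours of `v_j` are its children `C_j^m` together with its parents, the
vertices `v_i`, `i < j`, with `v_j ∈ C_i^m`; by (2) there is at most one parent. Hence the degree
is `κ + (≤ 1) = κ`, and a cycle is impossible because its vertex of largest index would have two
distinct parents, its two neighbours on the cycle. Conditions (1), (3) and (5) say exactly that
the edge sets of the `F^m` partition `E(G)`. -/

open Function

theorem SimpleGraph.isAcyclic_of_subsingleton_lowerNeighbors {V α : Type*} [LinearOrder α]
    {G : SimpleGraph V} {f : V → α} (hf : Injective f)
    (h : ∀ x, {y | G.Adj x y ∧ f y < f x}.Subsingleton) : G.IsAcyclic := by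
  classical
  intro x c hc
  obtain ⟨u, hu, hmax⟩ := c.support.toFinset.exists_max_image f ⟨x, by simp⟩
  rw [List.mem_toFinset] at hu
  set d := c.rotate u hu
  have hd : d.IsCycle := hc.rotate hu
  have hlt : ∀ w ∈ d.support, w ≠ u → f w < f u := fun w hw hne =>
    (hmax w (by simpa [d] using hw)).lt_of_ne (hf.ne hne)
  have hnil := hd.not_nil
  exact hd.snd_ne_penultimate <| h u
    ⟨d.adj_snd hnil, hlt _ (d.getVert_mem_support 1) (d.adj_snd hnil).ne'⟩
    ⟨(d.adj_penultimate hnil).symm, hlt _ (d.getVert_mem_support _) (d.adj_penultimate hnil).ne⟩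

theorem Cardinal.mk_union_eq_of_subsingleton {α : Type u} {s t : Set α} {κ : Cardinal.{u}}
    (hκ : ℵ₀ ≤ κ) (hs : #s = κ) (ht : t.Subsingleton) : #(s ∪ t : Set α) = κ :=
  le_antisymm
    (calc #(s ∪ t : Set α) ≤ #s + #t := mk_union_le s t
      _ ≤ κ + 1 := add_le_add hs.le (mk_le_one_iff_set_subsingleton.2 ht)
      _ = κ := add_one_eq hκ)
    (hs ▸ mk_le_mk_of_subset Set.subset_union_left)

section childGraph

open SimpleGraph

variable {V I : Type u} [LinearOrder I] {v : I ≃ V}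

theorem childGraph_adj {C : I → Set V} {x y : V} :
    (childGraph v C).Adj x y ↔
      v.symm x < v.symm y ∧ y ∈ C (v.symm x) ∨ v.symm y < v.symm x ∧ x ∈ C (v.symm y) := by
  simp only [childGraph, fromEdgeSet_adj, Set.mem_ofPred_eq]
  constructor
  · rintro ⟨⟨i, j, hji, hmem, he⟩, -⟩
    rcases Sym2.eq_iff.1 he with ⟨rfl, rfl⟩ | ⟨rfl, rfl⟩ <;> simp [hji, hmem]
  · rintro (⟨hlt, hmem⟩ | ⟨hlt, hmem⟩)
    · exact ⟨⟨_, _, hlt, by simpa using hmem, by simp⟩, fun h => hlt.ne (congrArg v.symm h)⟩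
    · exact ⟨⟨_, _, hlt, by simpa using hmem, by simp [Sym2.eq_swap]⟩,
        fun h => hlt.ne' (congrArg v.symm h)⟩

theorem childGraph_le {G : SimpleGraph V} {C : I → Set V} (hC : ∀ j, C j ⊆ G.neighborSet (v j)) :
    childGraph v C ≤ G := by
  intro x y hxy
  rcases childGraph_adj.1 hxy with ⟨-, hy⟩ | ⟨-, hx⟩
  · simpa using hC _ hy
  · exact (by simpa using hC _ hx : G.Adj y x).symm

theorem disjoint_edgeSet_childGraph {C D : I → Set V} (h : ∀ j, Disjoint (C j) (D j)) :
    Disjoint (childGraph v C).edgeSet (childGraph v D).edgeSet := by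
  rw [Set.disjoint_left]
  intro e
  induction e using Sym2.ind with
  | _ x y =>
    intro hC hD
    rcases childGraph_adj.1 hC with ⟨h1, hy⟩ | ⟨h1, hx⟩ <;>
      rcases childGraph_adj.1 hD with ⟨h2, hy'⟩ | ⟨h2, hx'⟩
    · exact Set.disjoint_left.1 (h _) hy hy'
    · exact h1.asymm h2
    · exact h1.asymm h2
    · exact Set.disjoint_left.1 (h _) hx hx'

theorem iUnion_edgeSet_childGraph {ι : Type*} {G : SimpleGraph V} {C : I → ι → Set V}
    (hle : ∀ m, childGraph v (fun j => C j m) ≤ G)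
    (hcover : ∀ i j, j < i → G.Adj (v j) (v i) → ∃ m, v i ∈ C j m) :
    ⋃ m, (childGraph v (fun j => C j m)).edgeSet = G.edgeSet := by
  refine subset_antisymm (Set.iUnion_subset fun m => edgeSet_mono (hle m)) ?_
  intro e
  induction e using Sym2.ind with
  | _ x y =>
    intro hxy
    simp only [Set.mem_iUnion, mem_edgeSet] at hxy ⊢
    rcases lt_trichotomy (v.symm x) (v.symm y) with hlt | heq | hlt
    · obtain ⟨m, hm⟩ := hcover _ _ hlt (by simpa using hxy)
      exact ⟨m, childGraph_adj.2 (Or.inl ⟨hlt, by simpa using hm⟩)⟩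
    · exact (hxy.ne (v.symm.injective heq)).elim
    · obtain ⟨m, hm⟩ := hcover _ _ hlt (by simpa using hxy.symm)
      exact ⟨m, childGraph_adj.2 (Or.inr ⟨hlt, by simpa using hm⟩)⟩

theorem childGraph_lowerNeighbors_subsingleton {C : I → Set V} (hC : Pairwise (Disjoint on C))
    (x : V) : {y | (childGraph v C).Adj x y ∧ v.symm y < v.symm x}.Subsingleton := by
  have hmem : ∀ w, (childGraph v C).Adj x w → v.symm w < v.symm x → x ∈ C (v.symm w) :=
    fun w hw hlt => ((childGraph_adj.1 hw).resolve_left fun h => h.1.asymm hlt).2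
  rintro y ⟨hy, hylt⟩ z ⟨hz, hzlt⟩
  by_contra hne
  exact Set.disjoint_left.1 (hC (v.symm.injective.ne hne)) (hmem y hy hylt) (hmem z hz hzlt)

theorem childGraph_isAcyclic {C : I → Set V} (hC : Pairwise (Disjoint on C)) :
    (childGraph v C).IsAcyclic :=
  isAcyclic_of_subsingleton_lowerNeighbors v.symm.injective
    (childGraph_lowerNeighbors_subsingleton hC)

theorem childGraph_cardRegular {κ : Cardinal.{u}} (hκ : ℵ₀ ≤ κ) {C : I → Set V}
    (hup : ∀ j, C j ⊆ {x | j < v.symm x}) (hdisj : Pairwise (Disjoint on C))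
    (hcard : ∀ j, #(C j) = κ) : (childGraph v C).CardRegular κ := by
  intro x
  have hsplit : (childGraph v C).neighborSet x =
      C (v.symm x) ∪ {y | (childGraph v C).Adj x y ∧ v.symm y < v.symm x} := by
    ext y
    simp only [mem_neighborSet, Set.mem_union, Set.mem_ofPred_eq]
    constructor
    · intro h
      rcases childGraph_adj.1 h with ⟨-, hy⟩ | ⟨hlt, -⟩
      · exact Or.inl hy
      · exact Or.inr ⟨h, hlt⟩
    · rintro (hy | ⟨h, -⟩)
      · exact childGraph_adj.2 (Or.inl ⟨hup _ hy, hy⟩)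
      · exact h
  rw [hsplit]
  exact mk_union_eq_of_subsingleton hκ (hcard _) (childGraph_lowerNeighbors_subsingleton hdisj x)

end childGraph

/-- A family `{C_j^m}` satisfying (C1)–(C5) yields a factorization of `G` into `κ`
spanning `κ`-regular forests. -/
theorem stmt_13 (κ : Cardinal.{u}) (hκ : ℵ₀ ≤ κ) {V : Type u} (G : SimpleGraph V)
    (v : κ.ord.ToType ≃ V) (C : κ.ord.ToType → κ.ord.ToType → Set V)
    (hC1 : ∀ j m, C j m ⊆ G.neighborSet (v j) ∩ {x : V | ∃ i, j < i ∧ x = v i})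
    (hC2 : ∀ m, Pairwise fun i j => Disjoint (C i m) (C j m))
    (hC3 : ∀ j, Pairwise fun m n => Disjoint (C j m) (C j n))
    (hC4 : ∀ j m, #(C j m) = κ)
    (hC5 : ∀ i j, j < i → G.Adj (v j) (v i) → ∃ m, v i ∈ C j m) :
    G.IsFactorization (fun m => childGraph v (fun j => C j m)) ∧
      ∀ m, (childGraph v (fun j => C j m)).IsAcyclic ∧
        (childGraph v (fun j => C j m)).CardRegular κ := by
  have hle : ∀ m, childGraph v (fun j => C j m) ≤ G :=
    fun m => childGraph_le fun j _ hx => (hC1 j m hx).1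
  have hup : ∀ m j, C j m ⊆ {x | j < v.symm x} := by
    intro m j x hx
    obtain ⟨-, i, hi, rfl⟩ := hC1 j m hx
    simpa using hi
  exact ⟨⟨hle, fun m n hmn => disjoint_edgeSet_childGraph fun j => hC3 j hmn,
      iUnion_edgeSet_childGraph hle hC5⟩,
    fun m => ⟨childGraph_isAcyclic (hC2 m), childGraph_cardRegular hκ (hup m) (hC2 m) (hC4 · m)⟩⟩
end

section
/- Let κ be an infinite cardinal. Then the complete graph K_κ has a factorization into κ perfect matchings, i.e., E(K_κ) can be partitioned into κ sets each of which is a perfect matching of K_κ. -/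
/-!
Identify the vertex set with a vector space `A` over `ZMod 2` of the same infinite cardinality
`κ` (e.g. `κ →₀ ZMod 2`). For each nonzero `c : A`, joining `x` to `x + c` is a perfect matching,
since translation by `c` is a fixed-point-free involution. Two distinct vertices `x ≠ y` are
joined in exactly one of these matchings, namely the one with `c = x + y`, and there are
exactly `κ` nonzero vectors `c`.
-/

open Cardinal

universe u

namespace SimpleGraph

variable {V W ι ι' : Type u}

def IsOneFactorization (G : SimpleGraph V) (F : ι → SimpleGraph V) : Prop :=
  G.IsFactorization F ∧ ∀ i v, ∃! w, (F i).Adj v w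

theorem isFactorization_iff_adj {G : SimpleGraph V} {F : ι → SimpleGraph V} :
    G.IsFactorization F ↔
      (∀ v w, G.Adj v w ↔ ∃ i, (F i).Adj v w) ∧
        ∀ i j v w, (F i).Adj v w → (F j).Adj v w → i = j := by
  constructor
  · rintro ⟨-, hdisj, hcover⟩
    refine ⟨fun v w => ?_, fun i j v w hi hj => ?_⟩
    · simpa using congrArg (s(v, w) ∈ ·) hcover.symm
    · by_contra hij
      exact Set.disjoint_left.1 (hdisj hij) (mem_edgeSet _ |>.2 hi) hj
  · rintro ⟨hcover, hunique⟩
    refine ⟨fun i v w h => (hcover v w).2 ⟨i, h⟩, fun i j hij => Set.disjoint_left.2 ?_, ?_⟩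
    · rintro ⟨v, w⟩ hi hj
      exact hij (hunique i j v w hi hj)
    · ext ⟨v, w⟩
      simp [hcover]

theorem IsOneFactorization.comp_equiv {G : SimpleGraph V} {F : ι → SimpleGraph V}
    (hF : G.IsOneFactorization F) (σ : ι' ≃ ι) : G.IsOneFactorization (F ∘ σ) := by
  obtain ⟨hfac, hmatch⟩ := hF
  rw [isFactorization_iff_adj] at hfac
  refine ⟨isFactorization_iff_adj.2 ⟨fun v w => ?_, fun i j v w hi hj => ?_⟩,
    fun i => hmatch (σ i)⟩
  · rw [hfac.1, ← σ.exists_congr_right]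
    simp
  · exact σ.injective (hfac.2 _ _ v w hi hj)

theorem IsOneFactorization.comap_equiv {G : SimpleGraph W} {F : ι → SimpleGraph W}
    (hF : G.IsOneFactorization F) (e : V ≃ W) :
    (G.comap e).IsOneFactorization fun i => (F i).comap e := by
  obtain ⟨hfac, hmatch⟩ := hF
  rw [isFactorization_iff_adj] at hfac
  refine ⟨isFactorization_iff_adj.2 ⟨fun v w => hfac.1 (e v) (e w),
    fun i j v w => hfac.2 i j (e v) (e w)⟩, fun i v => ?_⟩
  obtain ⟨w, hw, hw_unique⟩ := hmatch i (e v)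
  exact ⟨e.symm w, by simpa using hw, fun u hu => e.eq_symm_apply.2 (hw_unique _ hu)⟩

section ExponentTwo

variable {A : Type u} [AddCommGroup A]

def addMatching (c : A) : SimpleGraph A :=
  fromRel fun x y => x + y = c

variable (h2 : ∀ x : A, x + x = 0)
include h2

theorem add_eq_iff_eq_add_of_add_self {x y c : A} : x + y = c ↔ y = x + c := by
  rw [← eq_neg_add_iff_add_eq, neg_eq_of_add_eq_zero_left (h2 x)]

theorem addMatching_adj {c : A} (hc : c ≠ 0) {x y : A} :
    (addMatching c).Adj x y ↔ x + y = c := by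
  rw [addMatching, fromRel_adj, add_comm y, or_self]
  refine ⟨And.right, fun h => ⟨?_, h⟩⟩
  rintro rfl
  exact hc (h ▸ h2 x)

theorem isOneFactorization_top_addMatching :
    (⊤ : SimpleGraph A).IsOneFactorization fun c : {c : A // c ≠ 0} => addMatching c.1 := by
  refine ⟨isFactorization_iff_adj.2 ⟨fun v w => ?_, fun c d v w hc hd => ?_⟩, fun c v => ?_⟩
  · refine ⟨fun hne => ?_, fun ⟨_, hadj⟩ => hadj.ne⟩
    have hsum : v + w ≠ 0 := by
      rw [Ne, add_eq_iff_eq_add_of_add_self h2, add_zero]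
      exact Ne.symm hne
    exact ⟨⟨v + w, hsum⟩, (addMatching_adj h2 hsum).2 rfl⟩
  · rw [addMatching_adj h2 c.2] at hc
    rw [addMatching_adj h2 d.2] at hd
    exact Subtype.ext (hc.symm.trans hd)
  · simp only [addMatching_adj h2 c.2, add_eq_iff_eq_add_of_add_self h2]
    exact existsUnique_eq

end ExponentTwo

end SimpleGraph

theorem Finsupp.add_self_eq_zero_of_zmod_two {α : Type u} (x : α →₀ ZMod 2) : x + x = 0 := by
  ext
  simp [CharTwo.add_self_eq_zero]

theorem Cardinal.mk_finsupp_zmod_two_of_infinite (α : Type u) [Infinite α] :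
    #(α →₀ ZMod 2) = #α := by
  rw [mk_finsupp_lift_of_infinite, lift_uzero, mk_fintype (ZMod 2), ZMod.card, Nat.cast_ofNat,
    lift_ofNat, max_eq_left]
  exact natCast_lt_aleph0.le.trans (aleph0_le_mk α)

theorem Cardinal.mk_subtype_ne_of_infinite {α : Type u} [Infinite α] (a : α) :
    #{x // x ≠ a} = #α :=
  mk_compl_of_infinite {a} ((mk_singleton a).trans_lt (one_lt_aleph0.trans_le (aleph0_le_mk α)))

/-- `K_κ` has a factorization into `κ` perfect matchings. -/
theorem stmt_16 (κ : Cardinal.{u}) (hκ : ℵ₀ ≤ κ) :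
    ∃ F : κ.ord.ToType → SimpleGraph κ.ord.ToType,
      (⊤ : SimpleGraph κ.ord.ToType).IsFactorization F ∧
      ∀ i, ∀ v : κ.ord.ToType, ∃! w : κ.ord.ToType, (F i).Adj v w := by
  let V := κ.ord.ToType
  have : Infinite V := infinite_iff.2 ((mk_ord_toType κ).symm ▸ hκ)
  let A := V →₀ ZMod 2
  have hA : #A = #V := mk_finsupp_zmod_two_of_infinite V
  have : Infinite A := infinite_iff.2 (hA.symm ▸ aleph0_le_mk V)
  obtain ⟨e⟩ : Nonempty (V ≃ A) := Cardinal.eq.1 hA.symm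
  obtain ⟨σ⟩ : Nonempty (V ≃ {c : A // c ≠ 0}) :=
    Cardinal.eq.1 ((mk_subtype_ne_of_infinite 0).trans hA).symm
  have h := ((SimpleGraph.isOneFactorization_top_addMatching
    Finsupp.add_self_eq_zero_of_zmod_two).comp_equiv σ).comap_equiv e
  rw [SimpleGraph.comap_top e.injective] at h
  exact ⟨_, h⟩
end

section
/- Let κ be an infinite cardinal. Then the complete graph K_κ has a decomposition into κ spanning κ-regular forests. -/
open Cardinal

universe u

open SimpleGraph

section aux

variable {V : Type u} [LinearOrder V] (g : V × V × V ≃ V)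
    (e : ∀ w : V, V ↪ ({(g.symm w).2.1}ᶜ : Set V))

/-- the colour of the edge `{u, w}` with `u < w`. -/
noncomputable def colFn (u w : V) : V :=
  if u = (g.symm w).1 then (g.symm w).2.1 else (e w u).1

lemma colFn_inj (w : V) {u₁ u₂ : V} (h : colFn g e u₁ w = colFn g e u₂ w) :
    u₁ = u₂ := by
  have ne₁ : (e w u₁).1 ≠ (g.symm w).2.1 := Set.mem_compl_singleton_iff.mp (e w u₁).2
  have ne₂ : (e w u₂).1 ≠ (g.symm w).2.1 := Set.mem_compl_singleton_iff.mp (e w u₂).2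
  unfold colFn at h
  split_ifs at h with h1 h2 h2
  · rw [h1, h2]
  · exact absurd h.symm ne₂
  · exact absurd h ne₁
  · exact (e w).injective (Subtype.ext h)

lemma colFn_apply (p : V × V × V) : colFn g e p.1 (g p) = p.2.1 := by
  unfold colFn
  have hc : p.1 = (g.symm (g p)).1 := by rw [Equiv.symm_apply_apply]
  rw [if_pos hc, Equiv.symm_apply_apply]

/-- the `m`-th factor. -/
noncomputable def facG (m : V) : SimpleGraph V where
  Adj x y := (x < y ∧ colFn g e x y = m) ∨ (y < x ∧ colFn g e y x = m)
  symm := ⟨by intro x y h; tauto⟩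
  loopless := ⟨by intro x h; rcases h with ⟨h, -⟩ | ⟨h, -⟩ <;> exact lt_irrefl _ h⟩

lemma facG_adj {m x y : V} :
    (facG g e m).Adj x y ↔
      ((x < y ∧ colFn g e x y = m) ∨ (y < x ∧ colFn g e y x = m)) := Iff.rfl

end aux

lemma acyclic_of_unique_smaller {V : Type*} [LinearOrder V] (G : SimpleGraph V)
    (h : ∀ ⦃w u₁ u₂ : V⦄, G.Adj u₁ w → G.Adj u₂ w → u₁ < w → u₂ < w → u₁ = u₂) :
    G.IsAcyclic := by
  intro v p hp
  have hne : p.support.toFinset.Nonempty := by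
    simp [List.toFinset_nonempty_iff, p.support_ne_nil]
  set w := p.support.toFinset.max' hne with hwdef
  have hwmem : w ∈ p.support := by
    have := p.support.toFinset.max'_mem hne; rwa [List.mem_toFinset] at this
  have hwmax : ∀ u ∈ p.support, u ≤ w := fun u hu =>
    p.support.toFinset.le_max' u (List.mem_toFinset.mpr hu)
  set q := p.rotate w hwmem with hqdef
  have hq : q.IsCycle := hp.rotate hwmem
  have hqsup : ∀ u ∈ q.support, u ≤ w := by
    intro u hu
    rw [SimpleGraph.Walk.mem_support_iff] at hu
    rcases hu with rfl | hu
    · exact le_refl _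
    · exact hwmax u (List.tail_subset _ ((p.support_rotate w hwmem).perm.mem_iff.mp hu))
  clear_value q
  clear_value w
  clear hqdef hwmem hwmax hne hp hwdef
  cases q with
  | nil => exact hq.ne_nil rfl
  | cons hadj q' =>
    rename_i x
    have h3 : 3 ≤ q'.length + 1 := by simpa using hq.three_le_length
    have hdne : q'.darts ≠ [] := by
      intro hnil
      have := q'.length_darts
      rw [hnil] at this
      simp at this
      omega
    set d := q'.darts.getLast hdne with hddef
    have hdsnd : d.snd = w := by rw [hddef, Walk.getLast_darts_eq_lastDart]; rfl
    have hdadj : G.Adj d.fst w := hdsnd ▸ d.adj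
    have hdmem : d ∈ q'.darts := List.getLast_mem hdne
    have hdfst_mem : d.fst ∈ q'.support := q'.dart_fst_mem_support_of_mem_darts hdmem
    -- x < w and d.fst < w
    have hxlt : x < w := lt_of_le_of_ne (hqsup x (by simp)) hadj.ne'
    have hdlt : d.fst < w := lt_of_le_of_ne
      (hqsup d.fst (by simp [Walk.support_cons, hdfst_mem])) hdadj.ne
    have heq : d.fst = x := h hdadj hadj.symm hdlt hxlt
    -- but then first edge = last edge, contradicting trail
    have hedge : d.edge ∈ q'.edges := by
      rw [Walk.edges]; exact List.mem_map_of_mem hdmem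
    have : s(w, x) ∈ q'.edges := by
      have hde : d.edge = s(w, x) := by
        rw [Sym2.eq_swap, Dart.edge, ← heq, ← hdsnd]
      rwa [← hde]
    have hnodup := hq.edges_nodup
    rw [Walk.edges_cons] at hnodup
    exact (List.nodup_cons.mp hnodup).1 this


lemma exists_decomp {V : Type u} [LinearOrder V] [Infinite V]
    (hsmall : ∀ v : V, #(Set.Iio v) < #V) :
    ∃ F : V → SimpleGraph V, (⊤ : SimpleGraph V).IsFactorization F ∧
      ∀ m, (F m).IsAcyclic ∧ (F m).CardRegular #V := by
  have hκ : ℵ₀ ≤ #V := Cardinal.infinite_iff.mp ‹Infinite V›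
  obtain ⟨g⟩ : Nonempty (V × V × V ≃ V) := by
    apply Cardinal.eq.mp
    simp only [Cardinal.mk_prod, Cardinal.lift_id]
    rw [Cardinal.mul_eq_self hκ, Cardinal.mul_eq_self hκ]
  have he : ∀ mw : V, Nonempty (V ↪ ({mw}ᶜ : Set V)) := by
    intro mw
    rw [← Cardinal.le_def]
    apply le_of_eq
    symm
    apply Cardinal.mk_compl_of_infinite
    simpa using Cardinal.one_lt_aleph0.trans_le hκ
  have e : ∀ w : V, V ↪ ({(g.symm w).2.1}ᶜ : Set V) := fun w => (he _).some
  -- regularity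
  have reg : ∀ m v, #((facG g e m).neighborSet v) = #V := by
    intro m v
    apply le_antisymm (Cardinal.mk_set_le _)
    set S : Set V := {α : V | v < g (v, m, α)} with hSdef
    have hScompl : #(↥Sᶜ) < #V := by
      have hle : #(↥Sᶜ) ≤ #(Set.Iic v) := by
        apply Cardinal.mk_le_of_injective
          (f := fun α : ↥Sᶜ => (⟨g (v, m, α.1), not_lt.mp α.2⟩ : Set.Iic v))
        intro a b hab
        have h1 : g (v, m, a.1) = g (v, m, b.1) := congrArg Subtype.val hab
        have h2 := g.injective h1
        exact Subtype.ext (congrArg (fun p : V × V × V => p.2.2) h2)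
      have hIic : #(Set.Iic v) < #V := by
        rw [← Set.Iio_insert]
        calc #(insert v (Set.Iio v) : Set V) ≤ #(Set.Iio v) + 1 := Cardinal.mk_insert_le
          _ < #V := Cardinal.add_lt_of_lt hκ (hsmall v)
              (lt_of_lt_of_le Cardinal.one_lt_aleph0 hκ)
      exact hle.trans_lt hIic
    have hS : #S = #V := by
      by_contra hne
      have hlt : #S < #V := lt_of_le_of_ne (Cardinal.mk_set_le _) hne
      have := Cardinal.add_lt_of_lt hκ hlt hScompl
      rw [Cardinal.mk_sum_compl] at this
      exact lt_irrefl _ this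
    rw [← hS]
    apply Cardinal.mk_le_of_injective
      (f := fun α : S => (⟨g (v, m, α.1), by
        rw [SimpleGraph.mem_neighborSet, facG_adj]
        exact Or.inl ⟨α.2, colFn_apply g e (v, m, α.1)⟩⟩ : (facG g e m).neighborSet v))
    intro a b hab
    have h1 : g (v, m, a.1) = g (v, m, b.1) := congrArg Subtype.val hab
    have h2 := g.injective h1
    exact Subtype.ext (congrArg (fun p : V × V × V => p.2.2) h2)
  -- acyclicity
  have hac : ∀ m, (facG g e m).IsAcyclic := by
    intro m
    apply acyclic_of_unique_smaller
    intro w u₁ u₂ h1 h2 hl1 hl2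
    rw [facG_adj] at h1 h2
    have c1 : colFn g e u₁ w = m := by
      rcases h1 with ⟨-, hc⟩ | ⟨hgt, -⟩
      · exact hc
      · exact absurd hgt (asymm hl1)
    have c2 : colFn g e u₂ w = m := by
      rcases h2 with ⟨-, hc⟩ | ⟨hgt, -⟩
      · exact hc
      · exact absurd hgt (asymm hl2)
    exact colFn_inj g e w (c1.trans c2.symm)
  refine ⟨facG g e, ⟨fun m => le_top, ?_, ?_⟩, fun m => ⟨hac m, reg m⟩⟩
  · intro m m' hne
    rw [Set.disjoint_left]
    intro a
    induction a using Sym2.ind with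
    | _ x y =>
      intro ha ha'
      rw [SimpleGraph.mem_edgeSet, facG_adj] at ha ha'
      rcases ha with ⟨h1, c1⟩ | ⟨h1, c1⟩ <;> rcases ha' with ⟨h2, c2⟩ | ⟨h2, c2⟩
      · exact hne (c1.symm.trans c2)
      · exact absurd h2 (asymm h1)
      · exact absurd h2 (asymm h1)
      · exact hne (c1.symm.trans c2)
  · ext a
    induction a using Sym2.ind with
    | _ x y =>
      simp only [Set.mem_iUnion, SimpleGraph.mem_edgeSet, SimpleGraph.top_adj, facG_adj]
      constructor
      · rintro ⟨m, ⟨h, -⟩ | ⟨h, -⟩⟩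
        · exact ne_of_lt h
        · exact ne_of_gt h
      · intro hxy
        rcases hxy.lt_or_gt with h | h
        · exact ⟨colFn g e x y, Or.inl ⟨h, rfl⟩⟩
        · exact ⟨colFn g e y x, Or.inr ⟨h, rfl⟩⟩


/-- `K_κ` has a decomposition into `κ` spanning `κ`-regular forests. -/
theorem stmt_17 (κ : Cardinal.{u}) (hκ : ℵ₀ ≤ κ) :
    ∃ F : κ.ord.ToType → SimpleGraph κ.ord.ToType,
      (⊤ : SimpleGraph κ.ord.ToType).IsFactorization F ∧
      ∀ m, (F m).IsAcyclic ∧ (F m).CardRegular κ := by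
  have hV : #κ.ord.ToType = κ := by rw [Cardinal.mk_toType, Cardinal.card_ord]
  haveI : Infinite κ.ord.ToType := Cardinal.infinite_iff.mpr (by rw [hV]; exact hκ)
  have hsmall : ∀ v : κ.ord.ToType, #(Set.Iio v) < #κ.ord.ToType := by
    intro v
    rw [hV]
    exact Cardinal.mk_Iio_ord_toType v
  obtain ⟨F, hfac, hprop⟩ := exists_decomp hsmall
  exact ⟨F, hfac, fun m => ⟨(hprop m).1, fun v => ((hprop m).2 v).trans hV⟩⟩
end
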